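/- Assume conditions (M), (O), (R), (P). Then the family ℋ of hereditary subsets of Cm is closed under the equivalence operation ↔ of the Heyting algebra of upward closed subsets of Cm: if S, T ∈ ℋ then S ↔ T = Cm \ ((S Δ T)↓) ∈ ℋ. (This is Theorem 21 of the paper.) -/

import Mathlib

variable {A : Type*}

/-- `η` is a completely meet irreducible member of `C`, with (unique) cover `p` in `C`. -/
def IsCMI (C : Set (Setoid A)) (η p : Setoid A) : Prop :=
  η ∈ C ∧ p ∈ C ∧ η < p ∧ ∀ β ∈ C, η < β → p ≤ β

/-- A single up or down transposition between the intervals `I[pq.1, pq.2]`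
and `I[rs.1, rs.2]` of `C`. -/
def Persp (C : Set (Setoid A)) (pq rs : Setoid A × Setoid A) : Prop :=
  pq.1 ∈ C ∧ pq.2 ∈ C ∧ rs.1 ∈ C ∧ rs.2 ∈ C ∧
    ((pq.1 = pq.2 ⊓ rs.1 ∧ rs.2 = pq.2 ⊔ rs.1) ∨
      (rs.1 = rs.2 ⊓ pq.1 ∧ pq.2 = rs.2 ⊔ pq.1))

/-- Projectivity of intervals of `C`: a finite chain of up and down transpositions. -/
def Projective (C : Set (Setoid A)) : Setoid A × Setoid A → Setoid A × Setoid A → Prop :=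
  Relation.ReflTransGen (Persp C)

/-- Prime interval projectivity `φ ∼ ψ`: the prime intervals `I[φ,φ⁺]` and `I[ψ,ψ⁺]`
over completely meet irreducible members of `C` are projective. -/
def PIP (C : Set (Setoid A)) (φ ψ : Setoid A) : Prop :=
  ∃ p q, IsCMI C φ p ∧ IsCMI C ψ q ∧ Projective C (φ, p) (ψ, q)

/-- `Θ(a,b)`: the least member of `C` containing the pair `(a, b)`. -/
def theta (C : Set (Setoid A)) (a b : A) : Setoid A :=
  sInf {s | s ∈ C ∧ s.r a b}

/-- The relation `φ • ψ`: the pairs of `p = φ⁺ = ψ⁺` on which `φ` and `ψ` agree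
(the complement of the symmetric difference of `φ` and `ψ` intersected with `p`). -/
def Bul (p φ ψ : Setoid A) (x y : A) : Prop :=
  p.r x y ∧ (φ.r x y ↔ ψ.r x y)

/-- The set of completely meet irreducible members of `C`. -/
def CmSet (C : Set (Setoid A)) : Set (Setoid A) := {μ | ∃ p, IsCMI C μ p}

/-- `M(a) = {μ ∈ Cm : (1,a) ∈ μ}`. -/
def MsetA (C : Set (Setoid A)) (one a : A) : Set (Setoid A) :=
  {μ | μ ∈ CmSet C ∧ μ.r one a}

/-- The downward closure `X↓` of `X` inside the poset `Cm`. -/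
def DownCl (C : Set (Setoid A)) (X : Set (Setoid A)) : Set (Setoid A) :=
  {μ | μ ∈ CmSet C ∧ ∃ φ ∈ X, μ ≤ φ}

/-- The equivalence operation `S ↔ T := Cm \ ((S Δ T)↓)` of the Heyting algebra of
upward closed subsets of `Cm`. -/
def EqOpU (C : Set (Setoid A)) (S T : Set (Setoid A)) : Set (Setoid A) :=
  CmSet C \ DownCl C ((S \ T) ∪ (T \ S))

/-- `H` is a subgroup of the Boolean group `(Ū, •)`, where `U` is the PIP class of `η`
and `η⁺ = p`: `H` is a subset of `Ū = U ∪ {p}` containing the unit `p` and closed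
under `•`. -/
def SubgrpU (C : Set (Setoid A)) (η p : Setoid A) (H : Set (Setoid A)) : Prop :=
  H ⊆ {φ | PIP C φ η} ∪ {p} ∧ p ∈ H ∧
    ∀ φ ∈ H, ∀ ψ ∈ H, ∃ σ ∈ H, σ.r = Bul p φ ψ

/-- `H` is a hyperplane (maximal proper subgroup) of the Boolean group `(Ū, •)`. -/
def IsHyperplaneU (C : Set (Setoid A)) (η p : Setoid A) (H : Set (Setoid A)) : Prop :=
  SubgrpU C η p H ∧ H ≠ {φ | PIP C φ η} ∪ {p} ∧
    ∀ K, SubgrpU C η p K → H ⊆ K → K = H ∨ K = {φ | PIP C φ η} ∪ {p}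

/-- `Z ⊆ Cm` is hereditary: it is upward closed in `Cm`, and for every PIP class `U`
with `U⁺ ⊆ Z`, the set `(Z ∩ U) ∪ {η⁺}` is either all of `Ū` or a hyperplane of the
Boolean group `(Ū, •)`. -/
def Hered (C : Set (Setoid A)) (Z : Set (Setoid A)) : Prop :=
  (∀ μ ∈ Z, ∃ p, IsCMI C μ p) ∧
  (∀ μ ∈ Z, ∀ ν p, IsCMI C ν p → μ ≤ ν → ν ∈ Z) ∧
  ∀ η p, IsCMI C η p → {θ | (∃ q, IsCMI C θ q) ∧ η < θ} ⊆ Z →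
    (Z ∩ {φ | PIP C φ η} ∪ {p} = {φ | PIP C φ η} ∪ {p} ∨
      IsHyperplaneU C η p (Z ∩ {φ | PIP C φ η} ∪ {p}))

/-!
Fix a PIP class `U` with `η ∈ U`, write `p = η⁺` and let `Z = S ↔ T` with `U⁺ ⊆ Z`. A member
`φ` of `U` lies in `Z` exactly when `φ ∈ S ↔ φ ∈ T`: everything strictly above `φ` lies above
`p`, hence in `U⁺ ⊆ Z`, hence outside `S Δ T`. So the trace of `Z` on `Ū` is the pointwise
equivalence of the traces of `S` and `T`. If `U⁺ ⊄ S`, upward closure empties `S ∩ U` and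
`T ∩ U`, and the trace of `Z` is all of `Ū`. Otherwise both traces are `Ū` or hyperplanes of
the Boolean group `(Ū, •)`, i.e. subsets `W ∋ p` with the parity property
`x • y ∈ W ↔ (x ∈ W ↔ y ∈ W)`, and parity is preserved by pointwise equivalence.

All of this needs `Ū` to be closed under `•` (Theorem 10 of the paper). By (O) every lower
cover splits each class of its cover into at most two classes; hence for three lower covers of
`p` with a common pairwise meet, each is the `•`-product of the other two. If one interval
transposes up to both `I[x, p]` and `I[x', p]`, modularity produces such a third lower cover,
which lies in `U` by (P). Following a chain of transpositions from `I[x, p]` to `I[y, p]` and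
composing products along it (which again reduces to a common lower interval) gives `x • y`.
-/

section Bul

variable {p x y z σ a b : Setoid A}

theorem bul_comm (p x y : Setoid A) : Bul p x y = Bul p y x := by
  funext a b
  exact propext (and_congr_right fun _ => iff_comm)

theorem bul_self (p x : Setoid A) : p.r = Bul p x x := by
  funext a b
  exact propext ⟨fun hp => ⟨hp, Iff.rfl⟩, And.left⟩

theorem bul_right_top (hx : x ≤ p) : x.r = Bul p x p := by
  funext a b
  exact propext ⟨fun hr => ⟨hx hr, iff_of_true hr (hx hr)⟩, fun hb => hb.2.2 hb.1⟩

theorem bul_left_top (hy : y ≤ p) : y.r = Bul p p y := by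
  rw [bul_comm]; exact bul_right_top hy

theorem bul_cancel_left (hy : y ≤ p) (hσ : σ.r = Bul p x y) : y.r = Bul p x σ := by
  funext a b
  have e := congrFun₂ hσ a b
  have := @hy a b
  simp only [Bul, eq_iff_iff] at e ⊢
  tauto

theorem bul_left_comm {τ : Setoid A} (hτ : τ.r = Bul p x b) (hσ : σ.r = Bul p a b) :
    Bul p a τ = Bul p x σ := by
  funext c d
  have e₁ := congrFun₂ hτ c d
  have e₂ := congrFun₂ hσ c d
  simp only [Bul, eq_iff_iff] at e₁ e₂ ⊢
  rw [e₁, e₂]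
  tauto

theorem bul_bul_cancel_left {τ τ' : Setoid A} (hτ : τ.r = Bul p x a) (hτ' : τ'.r = Bul p x b) :
    Bul p τ τ' = Bul p a b := by
  funext c d
  have e₁ := congrFun₂ hτ c d
  have e₂ := congrFun₂ hτ' c d
  simp only [Bul, eq_iff_iff] at e₁ e₂ ⊢
  rw [e₁, e₂]
  tauto

theorem eq_of_bul_eq_top (hx : x ≤ p) (hy : y ≤ p) (h : p.r = Bul p x y) : x = y := by
  refine Setoid.ext fun a b => ?_
  have e := congrFun₂ h a b
  have := @hx a b
  have := @hy a b
  simp only [Bul, eq_iff_iff] at e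
  tauto

theorem eq_of_bul_eq_bul (hx : x ≤ p) (hz : z ≤ p) (h : Bul p x y = Bul p y z) : x = z := by
  refine Setoid.ext fun a b => ?_
  have e := congrFun₂ h a b
  have := @hx a b
  have := @hz a b
  simp only [Bul, eq_iff_iff] at e
  tauto

theorem inf_eq_of_rel_eq_bul (hx : x ≤ p) (hσ : σ.r = Bul p x y) : σ ⊓ x = x ⊓ y := by
  refine Setoid.ext fun a b => ?_
  have e := congrFun₂ hσ a b
  have := @hx a b
  simp only [Bul, eq_iff_iff] at e
  change _ ∧ _ ↔ _ ∧ _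
  tauto

theorem inf_eq_of_rel_eq_bul_right (hy : y ≤ p) (hσ : σ.r = Bul p x y) : σ ⊓ y = x ⊓ y :=
  (inf_eq_of_rel_eq_bul hy (hσ.trans (bul_comm p x y))).trans (inf_comm y x)

variable {C : Set (Setoid A)} {η : Setoid A} {H : Set (Setoid A)}

theorem SubgrpU.mem_of_rel_eq_bul (hH : SubgrpU C η p H) (hx : x ∈ H) (hy : y ∈ H)
    (hσ : σ.r = Bul p x y) : σ ∈ H := by
  obtain ⟨τ, hτ, hτr⟩ := hH.2.2 x hx y hy
  exact Setoid.eq_iff_rel_eq.2 (hσ.trans hτr.symm) ▸ hτ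

theorem SubgrpU.mem_of_bul_mem (hH : SubgrpU C η p H) (hy : y ≤ p) (hx : x ∈ H) (hσH : σ ∈ H)
    (hσ : σ.r = Bul p x y) : y ∈ H :=
  hH.mem_of_rel_eq_bul hx hσH (bul_cancel_left hy hσ)

def BulParity (U : Set (Setoid A)) (p : Setoid A) (W : Set (Setoid A)) : Prop :=
  ∀ x ∈ U, ∀ y ∈ U, ∀ σ ∈ U, σ.r = Bul p x y → (σ ∈ W ↔ (x ∈ W ↔ y ∈ W))

theorem BulParity.of_iff {U W W₁ W₂ : Set (Setoid A)} (h₁ : BulParity U p W₁)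
    (h₂ : BulParity U p W₂) (hW : ∀ w ∈ U, w ∈ W ↔ (w ∈ W₁ ↔ w ∈ W₂)) :
    BulParity U p W := by
  intro x hx y hy σ hσ hr
  rw [hW σ hσ, hW x hx, hW y hy, h₁ x hx y hy σ hσ hr, h₂ x hx y hy σ hσ hr]
  grind

end Bul

section Covers

variable {C : Set (Setoid A)} {η p q : Setoid A}

theorem IsCMI.mem (h : IsCMI C η p) : η ∈ C := h.1

theorem IsCMI.cover_mem (h : IsCMI C η p) : p ∈ C := h.2.1

theorem IsCMI.lt (h : IsCMI C η p) : η < p := h.2.2.1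

theorem IsCMI.le_of_lt (h : IsCMI C η p) {β : Setoid A} (hβ : β ∈ C) (hlt : η < β) : p ≤ β :=
  h.2.2.2 β hβ hlt

theorem IsCMI.cover_unique (hp : IsCMI C η p) (hq : IsCMI C η q) : p = q :=
  le_antisymm (hp.le_of_lt hq.cover_mem hq.lt) (hq.le_of_lt hp.cover_mem hp.lt)

structure CovIn (C : Set (Setoid A)) (a b : Setoid A) : Prop where
  left_mem : a ∈ C
  right_mem : b ∈ C
  lt : a < b
  eq_of_lt_of_le : ∀ c ∈ C, a < c → c ≤ b → c = b

theorem IsCMI.covIn (h : IsCMI C η p) : CovIn C η p :=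
  ⟨h.mem, h.cover_mem, h.lt, fun _ hc hlt hle => le_antisymm hle (h.le_of_lt hc hlt)⟩

namespace CovIn

variable {φ ψ : Setoid A}

theorem exists_rel_not_rel (h : CovIn C φ p) : ∃ u v, p.r u v ∧ ¬φ.r u v := by
  by_contra! hcon
  exact h.lt.ne (le_antisymm h.lt.le fun u v => hcon u v)

theorem sup_eq_of_not_le (hφ : CovIn C φ p) (hC : SupClosed C) (hψ : ψ ∈ C) (hle : ψ ≤ p)
    (hn : ¬ψ ≤ φ) : φ ⊔ ψ = p :=
  hφ.eq_of_lt_of_le _ (hC hφ.left_mem hψ) (left_lt_sup.2 hn) (sup_le hφ.lt.le hle)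

theorem le_iff_eq (hφ : CovIn C φ p) (hψ : CovIn C ψ p) : φ ≤ ψ ↔ φ = ψ := by
  refine ⟨fun hle => ?_, fun h => h.le⟩
  by_contra hne
  exact hψ.lt.ne (hφ.eq_of_lt_of_le ψ hψ.left_mem (lt_of_le_of_ne hle hne) hψ.lt.le)

theorem sup_eq_of_ne (hφ : CovIn C φ p) (hψ : CovIn C ψ p) (hC : SupClosed C)
    (hne : φ ≠ ψ) : φ ⊔ ψ = p :=
  hφ.sup_eq_of_not_le hC hψ.left_mem hψ.lt.le fun hle => hne ((hψ.le_iff_eq hφ).1 hle).symm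

end CovIn

def TransposesUp (I J : Setoid A × Setoid A) : Prop :=
  I.1 = I.2 ⊓ J.1 ∧ J.2 = I.2 ⊔ J.1

theorem TransposesUp.refl {a b : Setoid A} (hab : a ≤ b) : TransposesUp (a, b) (a, b) :=
  ⟨(inf_eq_right.2 hab).symm, (sup_eq_left.2 hab).symm⟩

theorem TransposesUp.trans {I J K : Setoid A × Setoid A} (hIJ : TransposesUp I J)
    (hJK : TransposesUp J K) : TransposesUp I K := by
  obtain ⟨e1, e2⟩ := hIJ
  obtain ⟨e3, e4⟩ := hJK
  have hd : I.2 ≤ J.2 := e2 ▸ le_sup_left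
  have he : J.1 ≤ K.1 := e3 ▸ inf_le_right
  constructor
  · rw [e1, e3, ← inf_assoc, inf_eq_left.2 hd]
  · rw [e4, e2, sup_assoc, sup_eq_right.2 he]

theorem Persp.symm {I J : Setoid A × Setoid A} (h : Persp C I J) : Persp C J I :=
  let ⟨h1, h2, h3, h4, h5⟩ := h
  ⟨h3, h4, h1, h2, h5.symm⟩

theorem Projective.symm {I J : Setoid A × Setoid A} (h : Projective C I J) :
    Projective C J I := by
  induction h with
  | refl => exact Relation.ReflTransGen.refl
  | tail _ hstep ih => exact Relation.ReflTransGen.head hstep.symm ih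

end Covers

structure IsModularSublattice (C : Set (Setoid A)) : Prop where
  supClosed : SupClosed C
  infClosed : InfClosed C
  modular : ∀ x ∈ C, ∀ y ∈ C, ∀ z ∈ C, x ≤ z → x ⊔ y ⊓ z = (x ⊔ y) ⊓ z

namespace IsModularSublattice

variable {C : Set (Setoid A)} (hC : IsModularSublattice C)
include hC

theorem covIn_right_of_transposesUp {I J : Setoid A × Setoid A} (hI : CovIn C I.1 I.2)
    (hJ1 : J.1 ∈ C) (hJ2 : J.2 ∈ C) (ht : TransposesUp I J) : CovIn C J.1 J.2 := by
  obtain ⟨e1, e2⟩ := ht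
  refine ⟨hJ1, hJ2, lt_of_le_of_ne (e2 ▸ le_sup_right) fun he => ?_, fun g hg hlt hle => ?_⟩
  · have h2le : I.2 ≤ J.1 := he ▸ e2 ▸ le_sup_left
    exact hI.lt.ne (by rw [e1, inf_eq_left.2 h2le])
  · have hmeet : I.1 ≤ I.2 ⊓ g := e1 ▸ inf_le_inf_left _ hlt.le
    rcases hmeet.lt_or_eq with hlt' | heq
    · have hd : I.2 ⊓ g = I.2 :=
        hI.eq_of_lt_of_le _ (hC.infClosed hI.right_mem hg) hlt' inf_le_left
      exact le_antisymm hle (e2 ▸ sup_le (hd ▸ inf_le_right) hlt.le)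
    · -- modularity: `g = J.1 ⊔ I.2 ⊓ g = J.1 ⊔ I.1 = J.1`
      have hmod := hC.modular J.1 hJ1 I.2 hI.right_mem g hg hlt.le
      have hI1J : I.1 ≤ J.1 := e1 ▸ inf_le_right
      rw [← heq, sup_eq_left.2 hI1J, sup_comm J.1 I.2, ← e2, inf_eq_right.2 hle] at hmod
      exact (hlt.ne hmod).elim

theorem covIn_left_of_transposesUp {I J : Setoid A × Setoid A} (hJ : CovIn C J.1 J.2)
    (hI1 : I.1 ∈ C) (hI2 : I.2 ∈ C) (ht : TransposesUp I J) : CovIn C I.1 I.2 := by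
  obtain ⟨e1, e2⟩ := ht
  refine ⟨hI1, hI2, lt_of_le_of_ne (e1 ▸ inf_le_left) fun he => ?_, fun g hg hlt hle => ?_⟩
  · have h2 : I.2 ≤ J.1 := he ▸ e1 ▸ inf_le_right
    exact hJ.lt.ne (by rw [e2, sup_eq_right.2 h2])
  · have hgJ : J.1 < g ⊔ J.1 := right_lt_sup.2 fun hgJ => hlt.not_ge (e1 ▸ le_inf hle hgJ)
    have hsup : g ⊔ J.1 = J.2 :=
      hJ.eq_of_lt_of_le _ (hC.supClosed hg hJ.left_mem) hgJ
        (e2 ▸ sup_le (hle.trans le_sup_left) le_sup_right)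
    have hI2J : I.2 ≤ J.2 := e2 ▸ le_sup_left
    have hmod := hC.modular g hg J.1 hJ.left_mem I.2 hI2 hle
    rwa [inf_comm J.1 I.2, ← e1, sup_eq_left.2 hlt.le, hsup, inf_eq_right.2 hI2J] at hmod

theorem covIn_inf_of_ne {φ ψ p : Setoid A} (hφ : CovIn C φ p) (hψ : CovIn C ψ p)
    (hne : φ ≠ ψ) : CovIn C (φ ⊓ ψ) φ :=
  hC.covIn_left_of_transposesUp (I := (φ ⊓ ψ, φ)) (J := (ψ, p)) hψ
    (hC.infClosed hφ.left_mem hψ.left_mem) hφ.left_mem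
    ⟨rfl, (hφ.sup_eq_of_ne hψ hC.supClosed hne).symm⟩

theorem sup_inf_eq_of_inf_le {d χ γ : Setoid A} (hd : d ∈ C) (hχ : χ ∈ C) (hγ : γ ∈ C)
    (hdχ : d ⊓ χ ≤ γ) (hγχ : γ ≤ χ) : (d ⊔ γ) ⊓ χ = γ := by
  rw [sup_comm, ← hC.modular γ hγ d hd χ hχ hγχ, sup_eq_left.2 hdχ]

theorem inf_inf_lt_of_covIn {x y z p : Setoid A} (hx : CovIn C x p) (hy : CovIn C y p)
    (hz : CovIn C z p) (hxy : x ≠ y) (hyz : y ≠ z) (hne : x ⊓ y ≠ y ⊓ z) :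
    x ⊓ y ⊓ z < y ⊓ z := by
  refine lt_of_le_of_ne (inf_le_inf_right z inf_le_right) fun he => hne ?_
  have hxy' : CovIn C (x ⊓ y) y := inf_comm y x ▸ hC.covIn_inf_of_ne hy hx hxy.symm
  exact (((hC.covIn_inf_of_ne hy hz hyz).le_iff_eq hxy').1 (he ▸ inf_le_left)).symm

end IsModularSublattice

section Theta

variable {C : Set (Setoid A)} {a b : A}

theorem rel_theta (C : Set (Setoid A)) (a b : A) : (theta C a b).r a b :=
  fun _ hs => hs.2

theorem theta_le {s : Setoid A} (hs : s ∈ C) (hr : s.r a b) : theta C a b ≤ s :=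
  sInf_le ⟨hs, hr⟩

variable {one : A} {α β : Setoid A} {x y z : A}
  (hθ : ∀ a b : A, theta C a b ∈ C) (hC : SupClosed C)
include hθ hC

theorem theta_le_sup_theta : theta C x y ≤ theta C one x ⊔ theta C one y :=
  theta_le (hC (hθ one x) (hθ one y)) <| Setoid.trans' _
    (Setoid.symm' _ (le_sup_left (b := theta C one y) (rel_theta C one x)))
    (le_sup_right (a := theta C one x) (rel_theta C one y))

theorem CovIn.sup_theta_eq (hc : CovIn C α β) (hxy : β.r x y) (nxy : ¬α.r x y) :
    α ⊔ theta C x y = β :=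
  hc.eq_of_lt_of_le _ (hC hc.left_mem (hθ x y))
    (left_lt_sup.2 fun hle => nxy (hle (rel_theta C x y)))
    (sup_le hc.lt.le (theta_le hc.right_mem hxy))

variable (hO : ∀ α ∈ C, ∀ a b : A, α ⊔ theta C one a = α ⊔ theta C one b ↔ α.r a b)
include hO

theorem CovIn.sup_theta_sup_theta_eq (hc : CovIn C α β) (hxy : β.r x y) (nxy : ¬α.r x y) :
    α ⊔ theta C one x ⊔ theta C one y = β ⊔ theta C one x := by
  refine le_antisymm (sup_le (sup_le_sup_right hc.lt.le _) ?_)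
    (sup_le ?_ (le_sup_right.trans le_sup_left))
  · rw [(hO β hc.right_mem x y).2 hxy]; exact le_sup_right
  · rw [← hc.sup_theta_eq hθ hC hxy nxy, sup_assoc]
    exact sup_le_sup_left (theta_le_sup_theta hθ hC) _

theorem CovIn.le_sup_theta (hc : CovIn C α β) (hxy : β.r x y) (nxy : ¬α.r x y)
    (hxz : β.r x z) (nxz : ¬α.r x z) (nyz : ¬α.r y z) : β ≤ α ⊔ theta C one x := by
  have hyz : (α ⊔ theta C one x).r y z :=
    (hO _ (hC hc.left_mem (hθ one x)) y z).1 <|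
      (hc.sup_theta_sup_theta_eq hθ hC hO hxy nxy).trans
        (hc.sup_theta_sup_theta_eq hθ hC hO hxz nxz).symm
  rw [← hc.sup_theta_eq hθ hC (Setoid.trans' _ (Setoid.symm' _ hxy) hxz) nyz]
  exact sup_le le_sup_left (theta_le (hC hc.left_mem (hθ one x)) hyz)

/-- Each class of `β` splits into at most two classes of its lower cover `α`. -/
theorem CovIn.rel_of_not_rel_of_not_rel (hc : CovIn C α β) (hxy : β.r x y) (hyz : β.r y z)
    (nxy : ¬α.r x y) (nyz : ¬α.r y z) : α.r x z := by
  by_contra nxz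
  have nyx : ¬α.r y x := fun h => nxy (Setoid.symm' _ h)
  have hx := hc.le_sup_theta hθ hC hO hxy nxy (Setoid.trans' _ hxy hyz) nxz nyz
  have hy := hc.le_sup_theta hθ hC hO (Setoid.symm' _ hxy) nyx hyz nyz nxz
  have hmono : ∀ {x y : A}, β ≤ α ⊔ theta C one x → β.r x y →
      α ⊔ theta C one y ≤ α ⊔ theta C one x := fun {x y} hβ hxy => by
    refine sup_le le_sup_left ?_
    calc theta C one y ≤ β ⊔ theta C one y := le_sup_right
      _ = β ⊔ theta C one x := ((hO β hc.right_mem x y).2 hxy).symm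
      _ ≤ α ⊔ theta C one x := sup_le hβ le_sup_right
  exact nxy ((hO α hc.left_mem x y).1
    (le_antisymm (hmono hy (Setoid.symm' _ hxy)) (hmono hx hxy)))

theorem CovIn.rel_iff_rel_iff_rel (hc : CovIn C α β) (hxy : β.r x y) (hyz : β.r y z) :
    α.r x z ↔ (α.r x y ↔ α.r y z) := by
  constructor
  · intro hxz
    exact ⟨fun h => Setoid.trans' _ (Setoid.symm' _ h) hxz,
      fun h => Setoid.trans' _ hxz (Setoid.symm' _ h)⟩
  · intro hiff
    by_cases h : α.r x y
    · exact Setoid.trans' _ h (hiff.1 h)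
    · exact hc.rel_of_not_rel_of_not_rel hθ hC hO hxy hyz h (mt hiff.2 h)

theorem CovIn.rel_eq_bul_of_inf_eq {σ χ χ' p : Setoid A} (hσ : CovIn C σ p)
    (hχ : CovIn C χ p) (hχ' : CovIn C χ' p) (h₁ : σ ⊓ χ = χ ⊓ χ') (h₂ : σ ⊓ χ' = χ ⊓ χ')
    (hj : σ ⊔ χ = p) : σ.r = Bul p χ χ' := by
  have m₁ : ∀ a b, σ.r a b ∧ χ.r a b ↔ χ.r a b ∧ χ'.r a b := Setoid.ext_iff.1 h₁
  have m₂ : ∀ a b, σ.r a b ∧ χ'.r a b ↔ χ.r a b ∧ χ'.r a b := Setoid.ext_iff.1 h₂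
  -- `p ∧ (σ ↔ (χ ↔ χ'))` is an equivalence containing `σ` and `χ`, hence all of `p = σ ⊔ χ`
  have htrans : ∀ {a b c}, p.r a b → p.r b c → (σ.r a b ↔ (χ.r a b ↔ χ'.r a b)) →
      (σ.r b c ↔ (χ.r b c ↔ χ'.r b c)) → (σ.r a c ↔ (χ.r a c ↔ χ'.r a c)) := by
    intro a b c hab hbc e₁ e₂
    rw [hσ.rel_iff_rel_iff_rel hθ hC hO hab hbc, hχ.rel_iff_rel_iff_rel hθ hC hO hab hbc,
      hχ'.rel_iff_rel_iff_rel hθ hC hO hab hbc, e₁, e₂]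
    grind
  let K : Setoid A :=
    { r := fun a b => p.r a b ∧ (σ.r a b ↔ (χ.r a b ↔ χ'.r a b))
      iseqv :=
        { refl := fun a => ⟨p.refl' a, iff_of_true (σ.refl' a)
            (iff_of_true (χ.refl' a) (χ'.refl' a))⟩
          symm := fun {a b} hab => by
            rw [σ.comm', χ.comm', χ'.comm']; exact ⟨p.symm' hab.1, hab.2⟩
          trans := fun hab hbc =>
            ⟨p.trans' hab.1 hbc.1, htrans hab.1 hbc.1 hab.2 hbc.2⟩ } }
  have hσK : σ ≤ K := fun a b hs => ⟨hσ.lt.le hs, iff_of_true hs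
    ⟨fun h => ((m₁ a b).1 ⟨hs, h⟩).2, fun h => ((m₂ a b).1 ⟨hs, h⟩).1⟩⟩
  have hχK : χ ≤ K := fun a b hc => ⟨hχ.lt.le hc, ⟨fun h => iff_of_true hc ((m₁ a b).1 ⟨h, hc⟩).2,
    fun h => ((m₁ a b).2 ⟨hc, h.1 hc⟩).1⟩⟩
  have hpK : p ≤ K := hj ▸ sup_le hσK hχK
  funext a b
  refine propext ⟨fun hs => (hσK hs).imp_right fun h => h.1 hs, fun hab => ?_⟩
  exact (hpK hab.1).2.2 hab.2

end Theta

section EqOpU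

variable {C : Set (Setoid A)} {S T : Set (Setoid A)} {μ ν : Setoid A}

theorem mem_iff_of_mem_eqOpU (hμ : μ ∈ EqOpU C S T) : μ ∈ S ↔ μ ∈ T := by
  by_contra hne
  refine hμ.2 ⟨hμ.1, μ, ?_, le_rfl⟩
  by_cases hS : μ ∈ S
  · exact Or.inl ⟨hS, fun hT => hne (iff_of_true hS hT)⟩
  · exact Or.inr ⟨not_not.1 fun hT => hne (iff_of_false hS hT), hS⟩

theorem mem_eqOpU_of_le (hμ : μ ∈ EqOpU C S T) (hν : ν ∈ CmSet C) (hle : μ ≤ ν) :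
    ν ∈ EqOpU C S T :=
  ⟨hν, fun ⟨_, ξ, hξ, hνξ⟩ => hμ.2 ⟨hμ.1, ξ, hξ, hle.trans hνξ⟩⟩

theorem mem_eqOpU_of_iff (hS : S ⊆ CmSet C) (hT : T ⊆ CmSet C) (hμ : μ ∈ CmSet C)
    (hup : ∀ θ ∈ CmSet C, μ < θ → θ ∈ EqOpU C S T) (hiff : μ ∈ S ↔ μ ∈ T) :
    μ ∈ EqOpU C S T := by
  refine ⟨hμ, fun ⟨_, ξ, hξ, hμξ⟩ => ?_⟩
  have hξC : ξ ∈ CmSet C := hξ.elim (fun h => hS h.1) (fun h => hT h.1)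
  rcases hμξ.lt_or_eq with hlt | rfl
  · have := mem_iff_of_mem_eqOpU (hup ξ hξC hlt)
    rcases hξ with ⟨h₁, h₂⟩ | ⟨h₁, h₂⟩ <;> tauto
  · rcases hξ with ⟨h₁, h₂⟩ | ⟨h₁, h₂⟩ <;> tauto

end EqOpU

def Ubar (C : Set (Setoid A)) (η p : Setoid A) : Set (Setoid A) := {φ | PIP C φ η} ∪ {p}

def cmAbove (C : Set (Setoid A)) (η : Setoid A) : Set (Setoid A) :=
  {θ | (∃ q, IsCMI C θ q) ∧ η < θ}

def traceU (C : Set (Setoid A)) (η p : Setoid A) (Z : Set (Setoid A)) : Set (Setoid A) :=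
  Z ∩ {φ | PIP C φ η} ∪ {p}

theorem traceU_subset_ubar (C : Set (Setoid A)) (η p : Setoid A) (Z : Set (Setoid A)) :
    traceU C η p Z ⊆ Ubar C η p :=
  Set.union_subset_union_left _ Set.inter_subset_right

def HasBul (C : Set (Setoid A)) (η p x y : Setoid A) : Prop :=
  ∃ σ ∈ Ubar C η p, σ.r = Bul p x y

theorem hasBul_self {C : Set (Setoid A)} (η p x : Setoid A) : HasBul C η p x x :=
  ⟨p, Or.inr rfl, bul_self p x⟩

structure FregeanSetting (one : A) (C : Set (Setoid A)) : Prop where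
  sInf_mem : ∀ S ⊆ C, sInf S ∈ C
  sSup_mem : ∀ S ⊆ C, sSup S ∈ C
  sSup_rel_iff : ∀ D ⊆ C, D.Nonempty → DirectedOn (· ≤ ·) D →
    ∀ x y : A, (sSup D).r x y ↔ ∃ s ∈ D, s.r x y
  modular : ∀ x ∈ C, ∀ y ∈ C, ∀ z ∈ C, x ≤ z → x ⊔ y ⊓ z = (x ⊔ y) ⊓ z
  sup_theta_eq_iff : ∀ α ∈ C, ∀ a b : A, α ⊔ theta C one a = α ⊔ theta C one b ↔ α.r a b
  top_eq_of_projective : ∀ φ ψ p q : Setoid A, IsCMI C φ p → IsCMI C ψ q →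
    Projective C (φ, p) (ψ, q) → p = q

namespace FregeanSetting

variable {one : A} {C : Set (Setoid A)} (h : FregeanSetting one C)
include h

theorem theta_mem (a b : A) : theta C a b ∈ C :=
  h.sInf_mem _ fun _ hs => hs.1

theorem supClosed : SupClosed C := fun a ha b hb => by
  simpa using h.sSup_mem {a, b} (Set.pair_subset ha hb)

theorem infClosed : InfClosed C := fun a ha b hb => by
  simpa using h.sInf_mem {a, b} (Set.pair_subset ha hb)

theorem isModularSublattice : IsModularSublattice C :=
  ⟨h.supClosed, h.infClosed, h.modular⟩

theorem exists_isCMI_ge_not_rel {b : Setoid A} (hb : b ∈ C) {u v : A} (hnb : ¬b.r u v) :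
    ∃ χ, b ≤ χ ∧ ¬χ.r u v ∧ IsCMI C χ (χ ⊔ theta C u v) := by
  set P := {c | c ∈ C ∧ b ≤ c ∧ ¬c.r u v}
  have hchains : ∀ c ⊆ P, IsChain (· ≤ ·) c → ∀ y ∈ c, ∃ ub ∈ P, ∀ z ∈ c, z ≤ ub := by
    intro c hcs hchain y hy
    refine ⟨sSup c, ⟨h.sSup_mem c fun t ht => (hcs ht).1,
      (hcs hy).2.1.trans (le_sSup hy), ?_⟩, fun z hz => le_sSup hz⟩
    rw [h.sSup_rel_iff c (fun t ht => (hcs ht).1) ⟨y, hy⟩ hchain.directedOn u v]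
    rintro ⟨s, hs, hrel⟩
    exact (hcs hs).2.2 hrel
  obtain ⟨m, hbm, ⟨hmC, -, hmuv⟩, hmax⟩ := zorn_le_nonempty₀ P hchains b ⟨hb, le_rfl, hnb⟩
  refine ⟨m, hbm, hmuv, hmC, h.supClosed hmC (h.theta_mem u v),
    left_lt_sup.2 fun hle => hmuv (hle (rel_theta C u v)), fun β hβ hlt => ?_⟩
  have hβuv : β.r u v := by
    by_contra hn
    exact hlt.ne (le_antisymm hlt.le (hmax ⟨hβ, hbm.trans hlt.le, hn⟩ hlt.le))
  exact sup_le hlt.le (theta_le hβ hβuv)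

theorem exists_isCMI_transposesUp {c d : Setoid A} (hcd : CovIn C c d) :
    ∃ χ q, IsCMI C χ q ∧ TransposesUp (c, d) (χ, q) := by
  obtain ⟨u, v, hduv, hcuv⟩ := hcd.exists_rel_not_rel
  obtain ⟨χ, hcχ, hχuv, hχ⟩ := h.exists_isCMI_ge_not_rel hcd.left_mem hcuv
  have hdχ : ¬d ≤ χ := fun hle => hχuv (hle hduv)
  have hmeet : d ⊓ χ = c := by
    by_contra hne
    exact hdχ (inf_eq_left.1 (hcd.eq_of_lt_of_le _ (h.infClosed hcd.right_mem hχ.mem)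
      (lt_of_le_of_ne (le_inf hcd.lt.le hcχ) (Ne.symm hne)) inf_le_left))
  have hdq : d ≤ χ ⊔ theta C u v := by
    refine inf_eq_left.1
      (hcd.eq_of_lt_of_le _ (h.infClosed hcd.right_mem hχ.cover_mem) ?_ inf_le_left)
    refine lt_of_le_of_ne (le_inf hcd.lt.le (hcχ.trans le_sup_left)) fun he => hcuv ?_
    exact he ▸ ⟨hduv, le_sup_right (a := χ) (rel_theta C u v)⟩
  refine ⟨χ, _, hχ, hmeet.symm, le_antisymm ?_ (sup_le hdq le_sup_left)⟩
  exact hχ.le_of_lt (h.supClosed hcd.right_mem hχ.mem) (right_lt_sup.2 hdχ)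

theorem inf_ne_inf_of_rel_eq_bul {x y z σ₁ σ₂ p : Setoid A} (hx : CovIn C x p)
    (hy : CovIn C y p) (hσ₂ : CovIn C σ₂ p) (hxy : x ≠ y) (h₁ : σ₁.r = Bul p x y)
    (h₂ : σ₂.r = Bul p y z) (hne : σ₁ ≠ σ₂) (hσ₂x : σ₂ ≠ x) : x ⊓ y ≠ y ⊓ z := by
  intro he
  have hγx := h.isModularSublattice.covIn_inf_of_ne hx hy hxy
  have m₂y : σ₂ ⊓ y = x ⊓ y := (inf_eq_of_rel_eq_bul hy.lt.le h₂).trans he.symm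
  have m₂x : σ₂ ⊓ x = x ⊓ y := by
    by_contra hc
    have hx₂ : σ₂ ⊓ x = x := hγx.eq_of_lt_of_le _ (h.infClosed hσ₂.left_mem hx.left_mem)
      (lt_of_le_of_ne (le_inf (m₂y.symm.le.trans inf_le_left) inf_le_left) (Ne.symm hc))
      inf_le_right
    exact hσ₂x ((hx.le_iff_eq hσ₂).1 (inf_eq_right.1 hx₂)).symm
  refine hne (Setoid.eq_iff_rel_eq.2 (h₁.trans (Eq.symm ?_)))
  exact hσ₂.rel_eq_bul_of_inf_eq h.theta_mem h.supClosed h.sup_theta_eq_iff hx hy m₂x m₂y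
    (hσ₂.sup_eq_of_ne hx h.supClosed hσ₂x)

variable {η p : Setoid A} (hη : IsCMI C η p)
include hη

theorem pip_iff {x : Setoid A} : PIP C x η ↔ IsCMI C x p ∧ Projective C (x, p) (η, p) := by
  refine ⟨fun ⟨p', q', hx, hη', hproj⟩ => ?_, fun hx => ⟨p, p, hx.1, hη, hx.2⟩⟩
  obtain rfl := hη.cover_unique hη'
  obtain rfl := h.top_eq_of_projective x η p' p hx hη' hproj
  exact ⟨hx, hproj⟩

theorem isCMI_of_pip {x : Setoid A} (hx : PIP C x η) : IsCMI C x p :=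
  ((h.pip_iff hη).1 hx).1

theorem projective_of_pip {x : Setoid A} (hx : PIP C x η) : Projective C (x, p) (η, p) :=
  ((h.pip_iff hη).1 hx).2

theorem le_of_mem_ubar {w : Setoid A} (hw : w ∈ Ubar C η p) : w ≤ p := by
  rcases hw with hw | rfl
  · exact (h.isCMI_of_pip hη hw).lt.le
  · exact le_rfl

theorem isCMI_of_covIn_of_projective {σ : Setoid A} (hσ : CovIn C σ p)
    (hproj : Projective C (σ, p) (η, p)) : IsCMI C σ p := by
  obtain ⟨χ, q, hχ, ht⟩ := h.exists_isCMI_transposesUp hσ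
  obtain rfl : q = p := h.top_eq_of_projective χ η q p hχ hη <|
    .head (Persp.symm ⟨hσ.left_mem, hσ.right_mem, hχ.mem, hχ.cover_mem, Or.inl ht⟩) hproj
  obtain rfl : σ = χ := ht.1.trans (inf_eq_right.2 hχ.lt.le)
  exact hχ

/-- The product is the third lower cover `d ⊔ (x ⊓ x')` of `p` above `x ⊓ x'`. -/
theorem hasBul_of_transposesUp {x x' c d : Setoid A} (hx : PIP C x η) (hx' : PIP C x' η)
    (hd : d ∈ C) (ht : TransposesUp (c, d) (x, p)) (ht' : TransposesUp (c, d) (x', p)) :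
    HasBul C η p x x' := by
  by_cases hne : x = x'
  · exact hne ▸ hasBul_self η p x
  have hC := h.isModularSublattice
  have hxC := h.isCMI_of_pip hη hx
  have hx'C := h.isCMI_of_pip hη hx'
  have hγ : x ⊓ x' ∈ C := h.infClosed hxC.mem hx'C.mem
  have hcx : c = d ⊓ x := ht.1
  have hcx' : c = d ⊓ x' := ht'.1
  have hcγ : c ≤ x ⊓ x' := le_inf (hcx ▸ inf_le_right) (hcx' ▸ inf_le_right)
  set σ := d ⊔ x ⊓ x'
  have hσC : σ ∈ C := h.supClosed hd hγ
  have hσx : σ ⊓ x = x ⊓ x' := hC.sup_inf_eq_of_inf_le hd hxC.mem hγ (hcx ▸ hcγ) inf_le_left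
  have hσx' : σ ⊓ x' = x ⊓ x' := hC.sup_inf_eq_of_inf_le hd hx'C.mem hγ (hcx' ▸ hcγ) inf_le_right
  have hσj : σ ⊔ x = p := by
    rw [sup_assoc, sup_eq_right.2 (inf_le_left : x ⊓ x' ≤ x)]; exact ht.2.symm
  have hγx : TransposesUp (x ⊓ x', x) (σ, p) :=
    ⟨hσx.symm.trans (inf_comm _ _), hσj.symm.trans (sup_comm _ _)⟩
  have hσp : CovIn C σ p := hC.covIn_right_of_transposesUp
    (hC.covIn_inf_of_ne hxC.covIn hx'C.covIn hne) hσC hxC.cover_mem hγx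
  have hγx' : TransposesUp (x ⊓ x', x) (x', p) :=
    ⟨rfl, (hxC.covIn.sup_eq_of_ne hx'C.covIn h.supClosed hne).symm⟩
  have hσproj : Projective C (σ, p) (η, p) :=
    .head (Persp.symm ⟨hγ, hxC.mem, hσC, hxC.cover_mem, Or.inl hγx⟩) <|
      .head ⟨hγ, hxC.mem, hx'C.mem, hxC.cover_mem, Or.inl hγx'⟩ (h.projective_of_pip hη hx')
  refine ⟨σ, Or.inl ((h.pip_iff hη).2 ⟨h.isCMI_of_covIn_of_projective hη hσp hσproj, hσproj⟩), ?_⟩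
  exact hσp.rel_eq_bul_of_inf_eq h.theta_mem h.supClosed h.sup_theta_eq_iff hxC.covIn hx'C.covIn
    hσx hσx' hσj

theorem hasBul_of_rel_eq_bul {x y z σ₁ σ₂ : Setoid A} (hx : PIP C x η) (hy : PIP C y η)
    (hz : PIP C z η) (hσ₁ : PIP C σ₁ η) (hσ₂ : PIP C σ₂ η) (h₁ : σ₁.r = Bul p x y)
    (h₂ : σ₂.r = Bul p y z) (hne : σ₁ ≠ σ₂) (hσ₂x : σ₂ ≠ x) : HasBul C η p x z := by
  have hC := h.isModularSublattice
  have cx := (h.isCMI_of_pip hη hx).covIn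
  have cy := (h.isCMI_of_pip hη hy).covIn
  have cz := (h.isCMI_of_pip hη hz).covIn
  have c₁ := (h.isCMI_of_pip hη hσ₁).covIn
  have c₂ := (h.isCMI_of_pip hη hσ₂).covIn
  have hxy : x ≠ y := by
    rintro rfl; exact c₁.lt.ne (Setoid.eq_iff_rel_eq.2 (h₁.trans (bul_self p x).symm))
  have hyz : y ≠ z := by
    rintro rfl; exact c₂.lt.ne (Setoid.eq_iff_rel_eq.2 (h₂.trans (bul_self p y).symm))
  have m₁x : σ₁ ⊓ x = x ⊓ y := inf_eq_of_rel_eq_bul cx.lt.le h₁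
  have m₁y : σ₁ ⊓ y = x ⊓ y := inf_eq_of_rel_eq_bul_right cy.lt.le h₁
  have m₂y : σ₂ ⊓ y = y ⊓ z := inf_eq_of_rel_eq_bul cy.lt.le h₂
  have m₂z : σ₂ ⊓ z = y ⊓ z := inf_eq_of_rel_eq_bul_right cz.lt.le h₂
  have hdx : σ₁ ⊓ σ₂ ⊓ x = x ⊓ y ⊓ z := by
    rw [inf_right_comm, m₁x, inf_assoc, inf_comm y σ₂, m₂y, ← inf_assoc]
  have hdz : σ₁ ⊓ σ₂ ⊓ z = x ⊓ y ⊓ z := by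
    rw [inf_assoc, m₂z, ← inf_assoc, m₁y]
  have hyzσ : y ⊓ z < σ₂ := by
    refine lt_of_le_of_ne (m₂y.symm.le.trans inf_le_left) fun he => hyz ?_
    exact ((c₂.le_iff_eq cy).1 (he ▸ inf_le_left)).symm.trans
      ((c₂.le_iff_eq cz).1 (he ▸ inf_le_right))
  -- `σ₁ ⊓ σ₂ ⋖ σ₂` leaves no room for `x ⊓ y ⊓ z < y ⊓ z < σ₂` above it
  have hdδ : ¬σ₁ ⊓ σ₂ ≤ x ⊓ y ⊓ z := fun hle => hyzσ.ne <|
    (inf_comm σ₂ σ₁ ▸ hC.covIn_inf_of_ne c₂ c₁ hne.symm).eq_of_lt_of_le _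
      (h.infClosed cy.left_mem cz.left_mem)
      (hle.trans_lt (hC.inf_inf_lt_of_covIn cx cy cz hxy hyz
        (h.inf_ne_inf_of_rel_eq_bul cx cy c₂ hxy h₁ h₂ hne hσ₂x))) hyzσ.le
  have hdC : σ₁ ⊓ σ₂ ∈ C := h.infClosed c₁.left_mem c₂.left_mem
  have hdp : σ₁ ⊓ σ₂ ≤ p := inf_le_left.trans c₁.lt.le
  refine h.hasBul_of_transposesUp hη hx hz hdC (c := x ⊓ y ⊓ z) ⟨hdx.symm, ?_⟩ ⟨hdz.symm, ?_⟩
  · exact ((sup_comm _ _).trans (cx.sup_eq_of_not_le h.supClosed hdC hdp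
      fun hle => hdδ (hdx ▸ le_inf le_rfl hle))).symm
  · exact ((sup_comm _ _).trans (cz.sup_eq_of_not_le h.supClosed hdC hdp
      fun hle => hdδ (hdz ▸ le_inf le_rfl hle))).symm

theorem hasBul_trans {x y z : Setoid A} (hx : PIP C x η) (hy : PIP C y η) (hz : PIP C z η)
    (hxy : HasBul C η p x y) (hyz : HasBul C η p y z) : HasBul C η p x z := by
  have hle : ∀ {w}, PIP C w η → w ≤ p := fun hw => h.le_of_mem_ubar hη (Or.inl hw)
  obtain ⟨σ₁, hσ₁ | rfl, h₁⟩ := hxy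
  swap
  · exact eq_of_bul_eq_top (hle hx) (hle hy) h₁ ▸ hyz
  obtain ⟨σ₂, hσ₂ | rfl, h₂⟩ := hyz
  swap
  · exact eq_of_bul_eq_top (hle hy) (hle hz) h₂ ▸ ⟨σ₁, Or.inl hσ₁, h₁⟩
  by_cases hne : σ₁ = σ₂
  · exact eq_of_bul_eq_bul (hle hx) (hle hz) (h₁.symm.trans (hne ▸ h₂)) ▸ hasBul_self η p x
  by_cases hσ₂x : σ₂ = x
  · refine ⟨y, Or.inl hy, ?_⟩
    rw [bul_cancel_left (hle hy) ((hσ₂x ▸ h₂).trans (bul_comm p y z)), bul_comm]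
  exact h.hasBul_of_rel_eq_bul hη hx hy hz hσ₁ hσ₂ h₁ h₂ hne hσ₂x

theorem exists_transposesUp_hasBul {b c : Setoid A × Setoid A} {χ : Setoid A}
    (hb : CovIn C b.1 b.2) (hχ : PIP C χ η) (hbχ : TransposesUp b (χ, p))
    (hc1 : c.1 ∈ C) (hc2 : c.2 ∈ C) (hup : TransposesUp b c) :
    ∃ χ₀, PIP C χ₀ η ∧ TransposesUp c (χ₀, p) ∧ HasBul C η p χ χ₀ := by
  have hc := h.isModularSublattice.covIn_right_of_transposesUp hb hc1 hc2 hup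
  obtain ⟨χ₀, q, hχ₀, hcχ₀⟩ := h.exists_isCMI_transposesUp hc
  have hproj : Projective C (χ₀, q) (η, p) :=
    .head (Persp.symm ⟨hc1, hc2, hχ₀.mem, hχ₀.cover_mem, Or.inl hcχ₀⟩) <|
      .head (Persp.symm ⟨hb.left_mem, hb.right_mem, hc1, hc2, Or.inl hup⟩) <|
        .head ⟨hb.left_mem, hb.right_mem, (h.isCMI_of_pip hη hχ).mem, hη.cover_mem, Or.inl hbχ⟩
          (h.projective_of_pip hη hχ)
  obtain rfl : q = p := h.top_eq_of_projective χ₀ η q p hχ₀ hη hproj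
  have hχ₀U : PIP C χ₀ η := (h.pip_iff hη).2 ⟨hχ₀, hproj⟩
  exact ⟨χ₀, hχ₀U, hcχ₀, h.hasBul_of_transposesUp hη hχ hχ₀U hb.right_mem hbχ (hup.trans hcχ₀)⟩

theorem hasBul_of_projective {x y : Setoid A} (hx : PIP C x η)
    (hxy : Projective C (x, p) (y, p)) : HasBul C η p x y := by
  have hC := h.isModularSublattice
  have hxC := h.isCMI_of_pip hη hx
  suffices H : ∀ J, Projective C (x, p) J → CovIn C J.1 J.2 ∧
      ∃ χ, PIP C χ η ∧ TransposesUp J (χ, p) ∧ HasBul C η p x χ by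
    obtain ⟨-, χ, hχ, hyχ, hxχ⟩ := H (y, p) hxy
    obtain rfl : y = χ := hyχ.1.trans (inf_eq_right.2 (h.isCMI_of_pip hη hχ).lt.le)
    exact hxχ
  intro J hJ
  induction hJ with
  | refl => exact ⟨hxC.covIn, x, hx, .refl hxC.lt.le, hasBul_self η p x⟩
  | tail _ hbc ih =>
    obtain ⟨hb, χ, hχ, hbχ, hxχ⟩ := ih
    obtain ⟨-, -, hc1, hc2, hup | hdown⟩ := hbc
    · obtain ⟨χ₀, hχ₀, hcχ₀, hχχ₀⟩ := h.exists_transposesUp_hasBul hη hb hχ hbχ hc1 hc2 hup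
      exact ⟨hC.covIn_right_of_transposesUp hb hc1 hc2 hup, χ₀, hχ₀, hcχ₀,
        h.hasBul_trans hη hx hχ hχ₀ hxχ hχχ₀⟩
    · exact ⟨hC.covIn_left_of_transposesUp hb hc1 hc2 hdown, χ, hχ,
        TransposesUp.trans hdown hbχ, hxχ⟩

/-- Theorem 10 of the paper. -/
theorem hasBul {x y : Setoid A} (hx : x ∈ Ubar C η p) (hy : y ∈ Ubar C η p) :
    HasBul C η p x y := by
  rcases hx with hx | rfl
  · rcases hy with hy | rfl
    · exact h.hasBul_of_projective hη hx
        ((h.projective_of_pip hη hx).trans (h.projective_of_pip hη hy).symm)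
    · exact ⟨x, Or.inl hx, bul_right_top (h.isCMI_of_pip hη hx).lt.le⟩
  · exact ⟨y, hy, bul_left_top (h.le_of_mem_ubar hη hy)⟩

theorem subgrpU_union_bul {H : Set (Setoid A)} (hH : SubgrpU C η p H) (x : Setoid A) :
    SubgrpU C η p {w | w ∈ Ubar C η p ∧ (w ∈ H ∨ ∃ τ ∈ H, τ.r = Bul p x w)} := by
  have mixed : ∀ {a b σ}, a ∈ H → (∃ τ ∈ H, τ.r = Bul p x b) → σ.r = Bul p a b →
      ∃ τ ∈ H, τ.r = Bul p x σ := fun {a b σ} ha ⟨τ, hτ, hτr⟩ hσ =>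
    let ⟨τ', hτ', hτ'r⟩ := hH.2.2 a ha τ hτ
    ⟨τ', hτ', hτ'r.trans (bul_left_comm hτr hσ)⟩
  refine ⟨fun w hw => hw.1, ⟨hH.1 hH.2.1, Or.inl hH.2.1⟩, ?_⟩
  rintro a ⟨haU, ha⟩ b ⟨hbU, hb⟩
  obtain ⟨σ, hσU, hσ⟩ := h.hasBul hη haU hbU
  refine ⟨σ, ⟨hσU, ?_⟩, hσ⟩
  rcases ha with ha | ha <;> rcases hb with hb | hb
  · exact Or.inl (hH.mem_of_rel_eq_bul ha hb hσ)
  · exact Or.inr (mixed ha hb hσ)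
  · exact Or.inr (mixed hb ha (hσ.trans (bul_comm p a b)))
  · obtain ⟨τa, hτa, hτar⟩ := ha
    obtain ⟨τb, hτb, hτbr⟩ := hb
    exact Or.inl (hH.mem_of_rel_eq_bul hτa hτb (hσ.trans (bul_bul_cancel_left hτar hτbr).symm))

theorem mem_isHyperplaneU_of_not_mem {H : Set (Setoid A)} (hH : IsHyperplaneU C η p H)
    {x y σ : Setoid A} (hxU : x ∈ Ubar C η p) (hyU : y ∈ Ubar C η p) (hx : x ∉ H)
    (hy : y ∉ H) (hσ : σ.r = Bul p x y) : σ ∈ H := by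
  have hK := h.subgrpU_union_bul hη hH.1 x
  rcases hH.2.2 _ hK fun w hw => ⟨hH.1.1 hw, Or.inl hw⟩ with hKH | hKU
  · exact (hx (hKH ▸ ⟨hxU, Or.inr ⟨p, hH.1.2.1, bul_self p x⟩⟩ : x ∈ H)).elim
  · have hyK : y ∈ {w | w ∈ Ubar C η p ∧ (w ∈ H ∨ ∃ τ ∈ H, τ.r = Bul p x w)} := by
      rw [hKU]; exact hyU
    obtain ⟨-, hyH | ⟨τ, hτ, hτr⟩⟩ := hyK
    · exact (hy hyH).elim
    · exact Setoid.eq_iff_rel_eq.2 (hσ.trans hτr.symm) ▸ hτ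

theorem bulParity_of_isHyperplaneU {H : Set (Setoid A)} (hH : IsHyperplaneU C η p H) :
    BulParity (Ubar C η p) p H := by
  intro x hxU y hyU σ _ hσ
  by_cases hx : x ∈ H <;> by_cases hy : y ∈ H
  · exact iff_of_true (hH.1.mem_of_rel_eq_bul hx hy hσ) (iff_of_true hx hy)
  · exact iff_of_false (fun hσH => hy (hH.1.mem_of_bul_mem (h.le_of_mem_ubar hη hyU) hx hσH hσ))
      (by tauto)
  · exact iff_of_false (fun hσH => hx (hH.1.mem_of_bul_mem (h.le_of_mem_ubar hη hxU) hy hσH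
      (hσ.trans (bul_comm p x y)))) (by tauto)
  · exact iff_of_true (h.mem_isHyperplaneU_of_not_mem hη hH hxU hyU hx hy hσ) (by tauto)

theorem eq_ubar_or_isHyperplaneU_of_bulParity {W : Set (Setoid A)} (hWU : W ⊆ Ubar C η p)
    (hpW : p ∈ W) (hW : BulParity (Ubar C η p) p W) :
    W = Ubar C η p ∨ IsHyperplaneU C η p W := by
  by_cases hne : W = Ubar C η p
  · exact Or.inl hne
  have hsub : SubgrpU C η p W := by
    refine ⟨hWU, hpW, fun a ha b hb => ?_⟩
    obtain ⟨σ, hσU, hσ⟩ := h.hasBul hη (hWU ha) (hWU hb)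
    exact ⟨σ, (hW a (hWU ha) b (hWU hb) σ hσU hσ).2 (iff_of_true ha hb), hσ⟩
  refine Or.inr ⟨hsub, hne, fun K hK hWK => ?_⟩
  by_cases hKW : K ⊆ W
  · exact Or.inl (hKW.antisymm hWK)
  obtain ⟨x, hxK, hxW⟩ := Set.not_subset.1 hKW
  refine Or.inr (hK.1.antisymm fun y hyU => ?_)
  by_cases hyW : y ∈ W
  · exact hWK hyW
  obtain ⟨σ, hσU, hσ⟩ := h.hasBul hη (hK.1 hxK) hyU
  have hσW : σ ∈ W := (hW x (hK.1 hxK) y hyU σ hσU hσ).2 (iff_of_false hxW hyW)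
  exact hK.mem_of_bul_mem (h.le_of_mem_ubar hη hyU) hxK (hWK hσW) hσ

theorem mem_traceU_iff {Z : Set (Setoid A)} {w : Setoid A} (hw : PIP C w η) :
    w ∈ traceU C η p Z ↔ w ∈ Z := by
  simp [traceU, hw, (h.isCMI_of_pip hη hw).lt.ne]

theorem mem_traceU_eqOpU_iff {S T : Set (Setoid A)} (hS : S ⊆ CmSet C) (hT : T ⊆ CmSet C)
    (hup : cmAbove C η ⊆ EqOpU C S T) {w : Setoid A} (hw : w ∈ Ubar C η p) :
    w ∈ traceU C η p (EqOpU C S T) ↔ (w ∈ traceU C η p S ↔ w ∈ traceU C η p T) := by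
  rcases hw with hw | rfl
  swap
  · exact iff_of_true (Or.inr rfl) (iff_of_true (Or.inr rfl) (Or.inr rfl))
  rw [h.mem_traceU_iff hη hw, h.mem_traceU_iff hη hw, h.mem_traceU_iff hη hw]
  have hwC := h.isCMI_of_pip hη hw
  refine ⟨mem_iff_of_mem_eqOpU, mem_eqOpU_of_iff hS hT ⟨p, hwC⟩ fun θ hθ hlt => hup ⟨hθ, ?_⟩⟩
  obtain ⟨q, hθq⟩ := hθ
  exact hη.lt.trans_le (hwC.le_of_lt hθq.mem hlt)

theorem bulParity_traceU_of_hered {S : Set (Setoid A)} (hS : Hered C S)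
    (hup : cmAbove C η ⊆ S) : BulParity (Ubar C η p) p (traceU C η p S) := by
  rcases hS.2.2 η p hη hup with hfull | hhyp
  · change traceU C η p S = Ubar C η p at hfull
    intro x hx y hy σ hσ _
    rw [hfull]
    exact iff_of_true hσ (iff_of_true hx hy)
  · exact h.bulParity_of_isHyperplaneU hη hhyp

theorem traceU_eqOpU_eq_ubar {S T : Set (Setoid A)} (hS : Hered C S) (hT : Hered C T)
    (hup : cmAbove C η ⊆ EqOpU C S T) (hnot : ¬cmAbove C η ⊆ S) :
    traceU C η p (EqOpU C S T) = Ubar C η p := by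
  obtain ⟨θ, ⟨⟨q, hθq⟩, hηθ⟩, hθS⟩ := Set.not_subset.1 hnot
  have hθT : θ ∉ T := fun hθT => hθS ((mem_iff_of_mem_eqOpU (hup ⟨⟨q, hθq⟩, hηθ⟩)).2 hθT)
  have hout : ∀ {Z : Set (Setoid A)}, Hered C Z → θ ∉ Z → ∀ w, PIP C w η → w ∉ Z :=
    fun hZ hθZ w hw hwZ => hθZ <| hZ.2.1 w hwZ θ q hθq <|
      (h.isCMI_of_pip hη hw).lt.le.trans (hη.le_of_lt hθq.mem hηθ)
  refine (traceU_subset_ubar C η p _).antisymm fun w hw => ?_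
  rcases hw with hw | rfl
  · rw [h.mem_traceU_eqOpU_iff hη hS.1 hT.1 hup (Or.inl hw), h.mem_traceU_iff hη hw,
      h.mem_traceU_iff hη hw]
    exact iff_of_false (hout hS hθS w hw) (hout hT hθT w hw)
  · exact Or.inr rfl

end FregeanSetting

theorem stmt16_general (one : A) (C : Set (Setoid A))
    (hInf : ∀ S ⊆ C, sInf S ∈ C) (hSup : ∀ S ⊆ C, sSup S ∈ C)
    (hDir : ∀ D ⊆ C, D.Nonempty → DirectedOn (· ≤ ·) D →
      ∀ x y : A, (sSup D).r x y ↔ ∃ s ∈ D, s.r x y)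
    (hM : ∀ x ∈ C, ∀ y ∈ C, ∀ z ∈ C, x ≤ z → x ⊔ y ⊓ z = (x ⊔ y) ⊓ z)
    (hO : ∀ α ∈ C, ∀ a b : A, α ⊔ theta C one a = α ⊔ theta C one b ↔ α.r a b)
    (hP : ∀ φ ψ p q : Setoid A, IsCMI C φ p → IsCMI C ψ q →
      Projective C (φ, p) (ψ, q) → p = q) :
    ∀ S T : Set (Setoid A), Hered C S → Hered C T → Hered C (EqOpU C S T) := by
  have h : FregeanSetting one C := ⟨hInf, hSup, hDir, hM, hO, hP⟩
  intro S T hS hT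
  refine ⟨fun μ hμ => hμ.1, fun μ hμ ν q hν hle => mem_eqOpU_of_le hμ ⟨q, hν⟩ hle,
    fun η p hη hup => ?_⟩
  by_cases hSU : cmAbove C η ⊆ S
  · have hTU : cmAbove C η ⊆ T := fun θ hθ => (mem_iff_of_mem_eqOpU (hup hθ)).1 (hSU hθ)
    refine h.eq_ubar_or_isHyperplaneU_of_bulParity hη (traceU_subset_ubar C η p _) (Or.inr rfl) ?_
    exact (h.bulParity_traceU_of_hered hη hS hSU).of_iff (h.bulParity_traceU_of_hered hη hT hTU)
      fun _ => h.mem_traceU_eqOpU_iff hη hS.1 hT.1 hup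
  · exact Or.inl (h.traceU_eqOpU_eq_ubar hη hS hT hup hSU)

/-- Theorem 21: the family `ℋ` of hereditary subsets of `Cm` is closed under the
equivalence operation `S ↔ T = Cm \ ((S Δ T)↓)` of the Heyting algebra of upward
closed subsets of `Cm`. -/
theorem stmt16 (one : A) (C : Set (Setoid A))
    (hInf : ∀ S ⊆ C, sInf S ∈ C) (hSup : ∀ S ⊆ C, sSup S ∈ C)
    (hDir : ∀ D ⊆ C, D.Nonempty → DirectedOn (· ≤ ·) D →
      ∀ x y : A, (sSup D).r x y ↔ ∃ s ∈ D, s.r x y)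
    (hM : ∀ x ∈ C, ∀ y ∈ C, ∀ z ∈ C, x ≤ z → x ⊔ y ⊓ z = (x ⊔ y) ⊓ z)
    (hO : ∀ α ∈ C, ∀ a b : A, α ⊔ theta C one a = α ⊔ theta C one b ↔ α.r a b)
    (hR : ∀ α ∈ C, ∀ β ∈ C, (∀ x : A, α.r one x ↔ β.r one x) → α = β)
    (hP : ∀ φ ψ p q : Setoid A, IsCMI C φ p → IsCMI C ψ q →
      Projective C (φ, p) (ψ, q) → p = q) :
    ∀ S T : Set (Setoid A), Hered C S → Hered C T → Hered C (EqOpU C S T) :=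
  stmt16_general one C hInf hSup hDir hM hO hP
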